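/- arXiv:2604.25841 — 4 statements merged into one kernel-verified Lean document; each statement's English description precedes it below -/
import Mathlib

section
/- Let G be the graph consisting of C vertex-disjoint paths of length 3 between distinct vertices u and v (an F'-gadget). Then mcut(G) = 3C; every bipartition placing u and v on the same side crosses at most 2C edges; and every bipartition placing u and v on different sides extends to one crossing all 3C edges. -/
/-- Indicator of a crossing edge between two sides. -/
def cross (a b : Bool) : ℕ := if a ≠ b then 1 else 0

/-- Cut size of a bipartition of the F'-gadget `F'(u,v)`: vertices are
`Sum.inl (i, false)` and `Sum.inl (i, true)` (the two internal vertices of the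
`i`-th path of length 3), `Sum.inr false = u` and `Sum.inr true = v`; the `i`-th
path is `u — (i,false) — (i,true) — v`. -/
def F'cut (C : ℕ) (f : (Fin C × Bool) ⊕ Bool → Bool) : ℕ :=
  ∑ i : Fin C,
    (cross (f (Sum.inr false)) (f (Sum.inl (i, false))) +
     cross (f (Sum.inl (i, false))) (f (Sum.inl (i, true))) +
     cross (f (Sum.inl (i, true))) (f (Sum.inr true)))

/-! Each path `u — x — y — v` contributes at most 3 crossing edges, and at most 2 when
`u` and `v` lie on the same side, since a closed walk of odd length crosses a cut an even
number of times. Putting `u` on one side, `v` on the other and letting the internal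
vertices alternate crosses every edge. -/

lemma cross_path_le_three (a x y b : Bool) : cross a x + cross x y + cross y b ≤ 3 := by
  unfold cross; revert a x y b; decide

lemma cross_triangle_le_two (a x y : Bool) : cross a x + cross x y + cross y a ≤ 2 := by
  unfold cross; revert a x y; decide

lemma cross_alternating_path {a b : Bool} (h : a ≠ b) :
    cross a (!a) + cross (!a) a + cross a b = 3 := by
  unfold cross; revert a b; decide

lemma F'cut_le_mul {C k : ℕ} {f : (Fin C × Bool) ⊕ Bool → Bool}
    (h : ∀ i : Fin C, cross (f (Sum.inr false)) (f (Sum.inl (i, false))) +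
      cross (f (Sum.inl (i, false))) (f (Sum.inl (i, true))) +
      cross (f (Sum.inl (i, true))) (f (Sum.inr true)) ≤ k) :
    F'cut C f ≤ k * C := by
  simpa [F'cut, mul_comm] using Finset.sum_le_card_nsmul Finset.univ _ k fun i _ => h i

def alternatingBipartition (C : ℕ) (b₁ b₂ : Bool) : (Fin C × Bool) ⊕ Bool → Bool
  | Sum.inl (_, false) => !b₁
  | Sum.inl (_, true) => b₁
  | Sum.inr false => b₁
  | Sum.inr true => b₂

lemma F'cut_alternatingBipartition (C : ℕ) {b₁ b₂ : Bool} (h : b₁ ≠ b₂) :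
    F'cut C (alternatingBipartition C b₁ b₂) = 3 * C := by
  simp [F'cut, alternatingBipartition, cross_alternating_path h, mul_comm]

/-- `mcut(F') = 3C`; any bipartition with `u,v` on the same side crosses at most `2C`
edges; and any placement of `u` and `v` on different sides extends to a bipartition
crossing all `3C` edges. -/
theorem stmt6 (C : ℕ) :
    (∀ f : (Fin C × Bool) ⊕ Bool → Bool, F'cut C f ≤ 3 * C) ∧
    (∃ f : (Fin C × Bool) ⊕ Bool → Bool, F'cut C f = 3 * C) ∧
    (∀ f : (Fin C × Bool) ⊕ Bool → Bool,
      f (Sum.inr false) = f (Sum.inr true) → F'cut C f ≤ 2 * C) ∧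
    (∀ b₁ b₂ : Bool, b₁ ≠ b₂ →
      ∃ f : (Fin C × Bool) ⊕ Bool → Bool,
        f (Sum.inr false) = b₁ ∧ f (Sum.inr true) = b₂ ∧ F'cut C f = 3 * C) := by
  refine ⟨fun f => F'cut_le_mul fun _ => cross_path_le_three _ _ _ _,
    ⟨_, F'cut_alternatingBipartition C Bool.false_ne_true⟩, ?_,
    fun b₁ b₂ h => ⟨_, rfl, rfl, F'cut_alternatingBipartition C h⟩⟩
  intro f huv
  refine F'cut_le_mul fun _ => ?_
  rw [huv]
  exact cross_triangle_le_two _ _ _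
end

section
/- A graph Q ⊆ E(G) is an edge dominating set of a graph G of size at most ℓ if and only if there exists a pair (S, M) where S is a vertex cover of G, M is a matching in G with all endpoints of M contained in S, and |M| + |S \ V(M)| ≤ ℓ. -/
/-!
Given an edge dominating set `Q`, take a maximal matching `M ⊆ Q` and `S = V(Q)`. By
maximality every edge of `Q \ M` meets `V(M)`, so it contributes at most one vertex to
`S \ V(M)`; hence `|M| + |S \ V(M)| ≤ |M| + |Q \ M| = |Q|`. Conversely, from `(S, M)` take
`Q = M ∪ D`, where `D` holds one edge at each non-isolated vertex of `S \ V(M)`: an edge of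
`G` has an endpoint `v ∈ S`, which is covered by `M` if `v ∈ V(M)` and by `D` otherwise.
-/

namespace EdgeDomination

open Finset

variable {V : Type*}

def IsMatching (M : Finset (Sym2 V)) : Prop :=
  ∀ e ∈ M, ∀ f ∈ M, e ≠ f → ∀ v : V, v ∈ e → v ∉ f

def IsVertexCover (E : Set (Sym2 V)) (S : Finset V) : Prop :=
  ∀ e ∈ E, ∃ v ∈ S, v ∈ e

def Dominates (E : Set (Sym2 V)) (Q : Finset (Sym2 V)) : Prop :=
  ∀ e ∈ E, ∃ f ∈ Q, ∃ v : V, v ∈ e ∧ v ∈ f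

section verts

variable [Fintype V] [DecidableEq V]

def verts (M : Finset (Sym2 V)) : Finset V :=
  univ.filter fun v => ∃ e ∈ M, v ∈ e

@[simp]
theorem mem_verts {M : Finset (Sym2 V)} {v : V} : v ∈ verts M ↔ ∃ e ∈ M, v ∈ e := by
  simp [verts]

theorem verts_mono {M Q : Finset (Sym2 V)} (h : M ⊆ Q) : verts M ⊆ verts Q := fun _ hv => by
  obtain ⟨e, he, hve⟩ := mem_verts.1 hv
  exact mem_verts.2 ⟨e, h he, hve⟩

theorem IsMatching.insert {M : Finset (Sym2 V)} (hM : IsMatching M) {f : Sym2 V}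
    (hf : ∀ v ∈ f, v ∉ verts M) : IsMatching (insert f M) := by
  intro a ha b hb hab v hva hvb
  rcases mem_insert.1 ha with rfl | haM <;> rcases mem_insert.1 hb with rfl | hbM
  · exact hab rfl
  · exact hf v hva (mem_verts.2 ⟨b, hbM, hvb⟩)
  · exact hf v hvb (mem_verts.2 ⟨a, haM, hva⟩)
  · exact hM a haM b hbM hab v hva hvb

theorem exists_maximal_isMatching_subset (Q : Finset (Sym2 V)) :
    ∃ M ⊆ Q, IsMatching M ∧ ∀ f ∈ Q \ M, ∃ v ∈ f, v ∈ verts M := by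
  classical
  obtain ⟨M, hM, hmax⟩ := exists_max_image (Q.powerset.filter IsMatching) card
    ⟨∅, by simp [IsMatching]⟩
  obtain ⟨hMQ, hM⟩ := mem_filter.1 hM
  refine ⟨M, mem_powerset.1 hMQ, hM, fun f hf => ?_⟩
  by_contra! hfree
  obtain ⟨hfQ, hfM⟩ := mem_sdiff.1 hf
  have hbigger : insert f M ∈ Q.powerset.filter IsMatching :=
    mem_filter.2 ⟨mem_powerset.2 (insert_subset hfQ (mem_powerset.1 hMQ)), hM.insert hfree⟩
  have := hmax _ hbigger
  rw [card_insert_of_notMem hfM] at this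
  omega

theorem card_verts_sdiff_verts_le {Q M : Finset (Sym2 V)}
    (hmax : ∀ f ∈ Q \ M, ∃ v ∈ f, v ∈ verts M) :
    (verts Q \ verts M).card ≤ (Q \ M).card := by
  set free : Sym2 V → Finset V := fun f => univ.filter fun v => v ∈ f ∧ v ∉ verts M
  have hcover : verts Q \ verts M ⊆ (Q \ M).biUnion free := by
    intro v hv
    obtain ⟨hvQ, hvM⟩ := mem_sdiff.1 hv
    obtain ⟨f, hf, hvf⟩ := mem_verts.1 hvQ
    have hfM : f ∉ M := fun hfM => hvM (mem_verts.2 ⟨f, hfM, hvf⟩)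
    exact mem_biUnion.2 ⟨f, mem_sdiff.2 ⟨hf, hfM⟩, mem_filter.2 ⟨mem_univ _, hvf, hvM⟩⟩
  have hfree : ∀ f ∈ Q \ M, (free f).card ≤ 1 := by
    intro f hf
    refine card_le_one.2 fun a ha b hb => ?_
    simp only [free, mem_filter, mem_univ, true_and] at ha hb
    by_contra hab
    obtain ⟨v, hvf, hvM⟩ := hmax f hf
    rw [(Sym2.mem_and_mem_iff hab).1 ⟨ha.1, hb.1⟩, Sym2.mem_iff] at hvf
    rcases hvf with rfl | rfl
    exacts [ha.2 hvM, hb.2 hvM]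
  calc (verts Q \ verts M).card ≤ ((Q \ M).biUnion free).card := card_le_card hcover
    _ ≤ (Q \ M).card * 1 := card_biUnion_le_card_mul _ _ _ hfree
    _ = (Q \ M).card := mul_one _

theorem exists_cover_matching_of_dominates {E : Set (Sym2 V)} {Q : Finset (Sym2 V)}
    (hQE : ↑Q ⊆ E) (hQ : Dominates E Q) :
    ∃ (S : Finset V) (M : Finset (Sym2 V)), IsVertexCover E S ∧ ↑M ⊆ E ∧ IsMatching M ∧
      verts M ⊆ S ∧ M.card + (S \ verts M).card ≤ Q.card := by
  obtain ⟨M, hMQ, hM, hmax⟩ := exists_maximal_isMatching_subset Q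
  refine ⟨verts Q, M, fun e he => ?_, (coe_subset.2 hMQ).trans hQE, hM, verts_mono hMQ, ?_⟩
  · obtain ⟨f, hf, v, hve, hvf⟩ := hQ e he
    exact ⟨v, mem_verts.2 ⟨f, hf, hvf⟩, hve⟩
  · have := card_verts_sdiff_verts_le hmax
    have := card_sdiff_add_card_eq_card hMQ
    omega

end verts

theorem exists_incident_edges_card_le [DecidableEq V] (E : Set (Sym2 V)) (T : Finset V) :
    ∃ D : Finset (Sym2 V), ↑D ⊆ E ∧ D.card ≤ T.card ∧
      ∀ e ∈ E, ∀ v ∈ T, v ∈ e → ∃ f ∈ D, v ∈ f := by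
  classical
  have hpick : ∀ v : V, ∃ f : Sym2 V, (∃ e ∈ E, v ∈ e) → f ∈ E ∧ v ∈ f := fun v => by
    by_cases h : ∃ e ∈ E, v ∈ e
    · obtain ⟨e, he, hve⟩ := h
      exact ⟨e, fun _ => ⟨he, hve⟩⟩
    · exact ⟨s(v, v), fun h' => absurd h' h⟩
  choose pick hpick using hpick
  refine ⟨(T.filter fun v => ∃ e ∈ E, v ∈ e).image pick, ?_, ?_, ?_⟩
  · intro f hf
    obtain ⟨v, hv, rfl⟩ := mem_image.1 hf
    exact (hpick v (mem_filter.1 hv).2).1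
  · exact card_image_le.trans (card_filter_le _ _)
  · intro e he v hv hve
    exact ⟨pick v, mem_image_of_mem _ (mem_filter.2 ⟨hv, e, he, hve⟩), (hpick v ⟨e, he, hve⟩).2⟩

theorem exists_dominates_of_isVertexCover [Fintype V] [DecidableEq V] {E : Set (Sym2 V)}
    {S : Finset V} {M : Finset (Sym2 V)} (hS : IsVertexCover E S) (hME : ↑M ⊆ E) :
    ∃ Q : Finset (Sym2 V), ↑Q ⊆ E ∧ Q.card ≤ M.card + (S \ verts M).card ∧ Dominates E Q := by
  obtain ⟨D, hDE, hD, hDdom⟩ := exists_incident_edges_card_le E (S \ verts M)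
  refine ⟨M ∪ D, by simpa using And.intro hME hDE, (card_union_le _ _).trans (by omega), ?_⟩
  intro e he
  obtain ⟨v, hvS, hve⟩ := hS e he
  by_cases hvM : v ∈ verts M
  · obtain ⟨f, hf, hvf⟩ := mem_verts.1 hvM
    exact ⟨f, mem_union_left _ hf, v, hve, hvf⟩
  · obtain ⟨f, hf, hvf⟩ := hDdom e he v (mem_sdiff.2 ⟨hvS, hvM⟩) hve
    exact ⟨f, mem_union_right _ hf, v, hve, hvf⟩

end EdgeDomination

open EdgeDomination in
theorem stmt10_general (V : Type) [Fintype V] [DecidableEq V] (G : SimpleGraph V)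
    (ℓ : ℕ) :
    (∃ Q : Finset (Sym2 V), ↑Q ⊆ G.edgeSet ∧ Q.card ≤ ℓ ∧
      ∀ e ∈ G.edgeSet, ∃ f ∈ Q, ∃ v : V, v ∈ e ∧ v ∈ f) ↔
    (∃ (S : Finset V) (M : Finset (Sym2 V)),
      (∀ e ∈ G.edgeSet, ∃ v ∈ S, v ∈ e) ∧
      ↑M ⊆ G.edgeSet ∧
      (∀ e ∈ M, ∀ f ∈ M, e ≠ f → ∀ v : V, v ∈ e → v ∉ f) ∧
      (∀ e ∈ M, ∀ v : V, v ∈ e → v ∈ S) ∧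
      M.card + (S \ Finset.univ.filter (fun v => ∃ e ∈ M, v ∈ e)).card ≤ ℓ) := by
  constructor
  · rintro ⟨Q, hQE, hQℓ, hQ⟩
    obtain ⟨S, M, hS, hME, hM, hMS, hcard⟩ := exists_cover_matching_of_dominates hQE hQ
    exact ⟨S, M, hS, hME, hM, fun e he v hv => hMS (mem_verts.2 ⟨e, he, hv⟩),
      hcard.trans hQℓ⟩
  · rintro ⟨S, M, hS, hME, -, -, hcard⟩
    obtain ⟨Q, hQE, hQ, hdom⟩ := exists_dominates_of_isVertexCover hS hME
    exact ⟨Q, hQE, hQ.trans hcard, hdom⟩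

/-- A graph `G` admits an edge dominating set of size at most `ℓ` (a set `Q` of edges
such that every edge of `G` shares an endpoint with an edge of `Q`) if and only if
there is a pair `(S, M)` where `S` is a vertex cover of `G`, `M` is a matching in `G`
all of whose endpoints lie in `S`, and `|M| + |S \ V(M)| ≤ ℓ`. -/
theorem stmt10 (V : Type) [Fintype V] [DecidableEq V] (G : SimpleGraph V)
    [DecidableRel G.Adj] (ℓ : ℕ) :
    (∃ Q : Finset (Sym2 V), ↑Q ⊆ G.edgeSet ∧ Q.card ≤ ℓ ∧
      ∀ e ∈ G.edgeSet, ∃ f ∈ Q, ∃ v : V, v ∈ e ∧ v ∈ f) ↔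
    (∃ (S : Finset V) (M : Finset (Sym2 V)),
      (∀ e ∈ G.edgeSet, ∃ v ∈ S, v ∈ e) ∧
      ↑M ⊆ G.edgeSet ∧
      (∀ e ∈ M, ∀ f ∈ M, e ≠ f → ∀ v : V, v ∈ e → v ∉ f) ∧
      (∀ e ∈ M, ∀ v : V, v ∈ e → v ∈ S) ∧
      M.card + (S \ Finset.univ.filter (fun v => ∃ e ∈ M, v ∈ e)).card ≤ ℓ) :=
  stmt10_general V G ℓ
end

section
/- Let Q be an inclusion-minimal edge dominating set of a graph G. Then the subgraph induced by the edge set Q is a vertex-disjoint union of stars, i.e., it contains no path on 4 vertices and no cycle. -/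
/-!
If both endpoints of an edge `f` of a minimal edge dominating set `Q` were covered by other
edges of `Q`, then every edge dominated by `f` would already be dominated by `Q \ {f}`,
contradicting minimality. A path `a b c d` with edges in `Q` has such a middle edge `bc`, and so
does every edge of a cycle, since each vertex of a cycle meets two of its edges.
-/

namespace SimpleGraph

variable {V : Type*}

def IsEdgeDominatingSet (G : SimpleGraph V) (Q : Finset (Sym2 V)) : Prop :=
  ∀ e ∈ G.edgeSet, ∃ f ∈ Q, ∃ v : V, v ∈ e ∧ v ∈ f

def IsMinimalEdgeDominatingSet (G : SimpleGraph V) (Q : Finset (Sym2 V)) : Prop :=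
  G.IsEdgeDominatingSet Q ∧ ∀ Q' ⊂ Q, ¬ G.IsEdgeDominatingSet Q'

namespace IsMinimalEdgeDominatingSet

variable {G : SimpleGraph V} {Q : Finset (Sym2 V)}

theorem false_of_both_ends_shared (hQ : G.IsMinimalEdgeDominatingSet Q) {u v : V}
    (hf : s(u, v) ∈ Q) {g h : Sym2 V} (hg : g ∈ Q) (hgf : g ≠ s(u, v)) (hug : u ∈ g)
    (hh : h ∈ Q) (hhf : h ≠ s(u, v)) (hvh : v ∈ h) : False := by
  classical
  obtain ⟨e, he, hpriv⟩ : ∃ e ∈ G.edgeSet,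
      ∀ f' ∈ Q.erase s(u, v), ∀ x : V, x ∈ e → x ∉ f' := by
    simpa [IsEdgeDominatingSet] using hQ.2 _ (Finset.erase_ssubset hf)
  obtain ⟨f', hf', x, hxe, hxf'⟩ := hQ.1 e he
  have hf'_eq : f' = s(u, v) := by
    by_contra hne
    exact hpriv f' (Finset.mem_erase.2 ⟨hne, hf'⟩) x hxe hxf'
  subst hf'_eq
  rcases Sym2.mem_iff.1 hxf' with rfl | rfl
  · exact hpriv g (Finset.mem_erase.2 ⟨hgf, hg⟩) x hxe hug
  · exact hpriv h (Finset.mem_erase.2 ⟨hhf, hh⟩) x hxe hvh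

theorem false_of_path {a b c d : V} (hQ : G.IsMinimalEdgeDominatingSet Q)
    (hac : a ≠ c) (hbd : b ≠ d) (hab : s(a, b) ∈ Q) (hbc : s(b, c) ∈ Q) (hcd : s(c, d) ∈ Q) :
    False :=
  hQ.false_of_both_ends_shared hbc hab (by grind [Sym2.eq_iff]) (Sym2.mem_mk_right a b)
    hcd (by grind [Sym2.eq_iff]) (Sym2.mem_mk_left c d)

end IsMinimalEdgeDominatingSet

theorem Walk.IsCycle.exists_mem_edges_ne {G : SimpleGraph V} {a u v : V} {p : G.Walk a a}
    (hp : p.IsCycle) (huv : s(u, v) ∈ p.edges) : ∃ w ≠ v, s(u, w) ∈ p.edges := by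
  have hv : v ∈ p.toSubgraph.neighborSet u := Walk.adj_toSubgraph_iff_mem_edges.2 huv
  have htwo := hp.ncard_neighborSet_toSubgraph_eq_two (p.fst_mem_support_of_mem_edges huv)
  obtain ⟨w, hw, hwv⟩ := (p.toSubgraph.neighborSet u).exists_ne_of_one_lt_ncard (by omega) v
  exact ⟨w, hwv, Walk.adj_toSubgraph_iff_mem_edges.1 hw⟩

theorem IsMinimalEdgeDominatingSet.isAcyclic_fromEdgeSet {G : SimpleGraph V}
    {Q : Finset (Sym2 V)} (hQ : G.IsMinimalEdgeDominatingSet Q) :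
    (fromEdgeSet (Q : Set (Sym2 V))).IsAcyclic := by
  intro a p hp
  have hQ_of_mem {e : Sym2 V} (he : e ∈ p.edges) : e ∈ Q :=
    (edgeSet_fromEdgeSet _ ▸ p.edges_subset_edgeSet he).1
  have hfirst : s(a, p.snd) ∈ p.edges := p.mk_start_snd_mem_edges hp.not_nil
  obtain ⟨x, hx, hax⟩ := hp.exists_mem_edges_ne hfirst
  obtain ⟨y, hy, hsy⟩ := hp.exists_mem_edges_ne (Sym2.eq_swap ▸ hfirst)
  exact hQ.false_of_path hx hy.symm (Sym2.eq_swap ▸ hQ_of_mem hax) (hQ_of_mem hfirst)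
    (hQ_of_mem hsy)

end SimpleGraph

theorem stmt11_general (V : Type) (G : SimpleGraph V)
    (Q : Finset (Sym2 V))
    (hdom : ∀ e ∈ G.edgeSet, ∃ f ∈ Q, ∃ v : V, v ∈ e ∧ v ∈ f)
    (hmin : ∀ Q' ⊂ Q, ¬ (∀ e ∈ G.edgeSet, ∃ f ∈ Q', ∃ v : V, v ∈ e ∧ v ∈ f)) :
    (¬ ∃ a b c d : V, a ≠ b ∧ a ≠ c ∧ a ≠ d ∧ b ≠ c ∧ b ≠ d ∧ c ≠ d ∧
      s(a, b) ∈ Q ∧ s(b, c) ∈ Q ∧ s(c, d) ∈ Q) ∧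
    (SimpleGraph.fromEdgeSet (↑Q : Set (Sym2 V))).IsAcyclic := by
  have hQ : G.IsMinimalEdgeDominatingSet Q := ⟨hdom, hmin⟩
  refine ⟨?_, hQ.isAcyclic_fromEdgeSet⟩
  rintro ⟨a, b, c, d, -, hac, -, -, hbd, -, hab, hbc, hcd⟩
  exact hQ.false_of_path hac hbd hab hbc hcd

/-- Let `Q` be an inclusion-minimal edge dominating set of a graph `G`. Then the
subgraph induced by the edge set `Q` is a vertex-disjoint union of stars: it contains
no path on 4 vertices and no cycle. -/
theorem stmt11 (V : Type) [Fintype V] [DecidableEq V] (G : SimpleGraph V)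
    (Q : Finset (Sym2 V)) (hsub : ↑Q ⊆ G.edgeSet)
    (hdom : ∀ e ∈ G.edgeSet, ∃ f ∈ Q, ∃ v : V, v ∈ e ∧ v ∈ f)
    (hmin : ∀ Q' ⊂ Q, ¬ (∀ e ∈ G.edgeSet, ∃ f ∈ Q', ∃ v : V, v ∈ e ∧ v ∈ f)) :
    (¬ ∃ a b c d : V, a ≠ b ∧ a ≠ c ∧ a ≠ d ∧ b ≠ c ∧ b ≠ d ∧ c ≠ d ∧
      s(a, b) ∈ Q ∧ s(b, c) ∈ Q ∧ s(c, d) ∈ Q) ∧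
    (SimpleGraph.fromEdgeSet (↑Q : Set (Sym2 V))).IsAcyclic :=
  stmt11_general V G Q hdom hmin
end

section
/- Let G be a graph and let (S, M) be a pair where S is a vertex cover of G containing no isolated vertices of G, and M is a matching in G with V(M) ⊆ S. Then there exists an edge dominating set Q of G with |Q| ≤ |M| + |S \ V(M)|. -/
namespace SimpleGraph

variable {V : Type*} (G : SimpleGraph V)

lemma exists_incidentEdges_card_le (T : Finset V) (hT : ∀ v ∈ T, ∃ w, G.Adj v w) :
    ∃ R : Finset (Sym2 V), ↑R ⊆ G.edgeSet ∧ (∀ v ∈ T, ∃ e ∈ R, v ∈ e) ∧ R.card ≤ T.card := by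
  classical
  choose! w hw using hT
  refine ⟨T.image fun v => s(v, w v), ?_, ?_, Finset.card_image_le⟩
  · intro e he
    obtain ⟨v, hv, rfl⟩ := Finset.mem_image.mp (Finset.mem_coe.mp he)
    exact hw v hv
  · exact fun v hv => ⟨s(v, w v), Finset.mem_image_of_mem _ hv, Sym2.mem_mk_left v (w v)⟩

lemma dominates_of_covers_vertexCover {S : Set V} {Q : Set (Sym2 V)}
    (hcover : ∀ e ∈ G.edgeSet, ∃ v ∈ S, v ∈ e) (hQ : ∀ v ∈ S, ∃ f ∈ Q, v ∈ f) :
    ∀ e ∈ G.edgeSet, ∃ f ∈ Q, ∃ v : V, v ∈ e ∧ v ∈ f := by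
  intro e he
  obtain ⟨v, hvS, hve⟩ := hcover e he
  obtain ⟨f, hfQ, hvf⟩ := hQ v hvS
  exact ⟨f, hfQ, v, hve, hvf⟩

end SimpleGraph

theorem stmt13_general (V : Type) [Fintype V] [DecidableEq V] (G : SimpleGraph V)
    (S : Finset V) (M : Finset (Sym2 V))
    (hcover : ∀ e ∈ G.edgeSet, ∃ v ∈ S, v ∈ e)
    (hiso : ∀ v ∈ S, ∃ w : V, G.Adj v w)
    (hM : ↑M ⊆ G.edgeSet) :
    ∃ Q : Finset (Sym2 V), ↑Q ⊆ G.edgeSet ∧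
      (∀ e ∈ G.edgeSet, ∃ f ∈ Q, ∃ v : V, v ∈ e ∧ v ∈ f) ∧
      Q.card ≤ M.card + (S \ Finset.univ.filter (fun v => ∃ e ∈ M, v ∈ e)).card := by
  set T := S \ Finset.univ.filter (fun v => ∃ e ∈ M, v ∈ e)
  obtain ⟨R, hRG, hTR, hRcard⟩ :=
    G.exists_incidentEdges_card_le T fun v hv => hiso v (Finset.mem_sdiff.mp hv).1
  refine ⟨M ∪ R, by rw [Finset.coe_union]; exact Set.union_subset hM hRG, G.dominates_of_covers_vertexCover hcover ?_,
    (Finset.card_union_le M R).trans (Nat.add_le_add_left hRcard _)⟩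
  intro v hvS
  by_cases hvM : ∃ f ∈ M, v ∈ f
  · obtain ⟨f, hfM, hvf⟩ := hvM
    exact ⟨f, Finset.mem_union_left R hfM, hvf⟩
  · obtain ⟨e, heR, hve⟩ := hTR v (Finset.mem_sdiff.mpr ⟨hvS, by simpa using hvM⟩)
    exact ⟨e, Finset.mem_union_right M heR, hve⟩

/-- If `S` is a vertex cover of `G` containing no isolated vertices of `G` and `M` is a
matching in `G` with `V(M) ⊆ S`, then `G` has an edge dominating set `Q` with
`|Q| ≤ |M| + |S \ V(M)|`. -/
theorem stmt13 (V : Type) [Fintype V] [DecidableEq V] (G : SimpleGraph V)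
    (S : Finset V) (M : Finset (Sym2 V))
    (hcover : ∀ e ∈ G.edgeSet, ∃ v ∈ S, v ∈ e)
    (hiso : ∀ v ∈ S, ∃ w : V, G.Adj v w)
    (hM : ↑M ⊆ G.edgeSet)
    (hmatch : ∀ e ∈ M, ∀ f ∈ M, e ≠ f → ∀ v : V, v ∈ e → v ∉ f)
    (hMS : ∀ e ∈ M, ∀ v : V, v ∈ e → v ∈ S) :
    ∃ Q : Finset (Sym2 V), ↑Q ⊆ G.edgeSet ∧
      (∀ e ∈ G.edgeSet, ∃ f ∈ Q, ∃ v : V, v ∈ e ∧ v ∈ f) ∧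
      Q.card ≤ M.card + (S \ Finset.univ.filter (fun v => ∃ e ∈ M, v ∈ e)).card :=
  stmt13_general V G S M hcover hiso hM
end
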